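/- arXiv:1310.8472 — 3 statements merged into one kernel-verified Lean document; each statement's English description precedes it below -/
import Mathlib

section
/- Let U ⊆ ℂ be open, f, g : ℂ → ℂ holomorphic on U, p ∈ U with g′(p) ≠ 0 and Im R(p) ≠ 0, where R = f′/g′. Let χ(z) = (Re f(z), Re g(z)), let W ⊆ ℝ² be open with χ(p) ∈ W, and let ψ : W → U be continuous at χ(p) with ψ(χ(p)) = p and χ(ψ(x)) = x for all x ∈ W. Then the map Φ : W → ℝ², Φ(x) = (−Im g(ψ(x)), Im f(ψ(x))), is differentiable at x⁰ = χ(p) and its derivative is represented by the symmetric matrix (1/Im R(p))·[[1, −Re R(p)],[−Re R(p), |R(p)|²]], which has determinant 1 and is positive definite when Im R(p) > 0. -/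
open Complex Matrix

/-!
By the inverse function theorem in its left-inverse form, `ψ` is differentiable at `χ(p)` with
derivative the inverse of `dχ_p : w ↦ (Re (f'(p) w), Re (g'(p) w))`; this real-linear map is
injective, hence invertible, because `Im R ≠ 0`. The chain rule reduces the claim to linear
algebra: with `z = g'(p) w`, so that `f'(p) w = R z`, the pair `(-Im z, Im (R z))` is obtained
from `(Re (R z), Re z)` by the matrix `(Im R)⁻¹ [[1, -Re R], [-Re R, |R|²]]`. This matrix is
`(Im R)⁻¹ AᵀA` with `A = [[1, -Re R], [0, Im R]]`, whence its determinant and positivity.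
-/

noncomputable def conjugateMatrix (R : ℂ) : Matrix (Fin 2) (Fin 2) ℝ :=
  R.im⁻¹ • !![1, -R.re; -R.re, ‖R‖ ^ 2]

theorem conjugateMatrix_transpose (R : ℂ) : (conjugateMatrix R)ᵀ = conjugateMatrix R := by
  ext i j
  fin_cases i <;> fin_cases j <;> rfl

theorem conjugateMatrix_det {R : ℂ} (hR : R.im ≠ 0) : (conjugateMatrix R).det = 1 := by
  rw [conjugateMatrix, det_smul, det_fin_two_of, Fintype.card_fin, Complex.sq_norm, normSq_apply]
  field_simp
  ring

theorem conjugateMatrix_eq_smul_conjTranspose_mul_self (R : ℂ) :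
    conjugateMatrix R =
      R.im⁻¹ • ((!![1, -R.re; 0, R.im] : Matrix (Fin 2) (Fin 2) ℝ)ᴴ * !![1, -R.re; 0, R.im]) := by
  rw [conjugateMatrix, Complex.sq_norm, normSq_apply]
  congr 1
  ext i j
  fin_cases i <;> fin_cases j <;> simp [Matrix.mul_apply]

theorem conjugateMatrix_posDef {R : ℂ} (hR : 0 < R.im) : (conjugateMatrix R).PosDef := by
  rw [conjugateMatrix_eq_smul_conjTranspose_mul_self]
  refine PosDef.smul (PosDef.conjTranspose_mul_self _ (mulVec_injective_iff_isUnit.mpr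
    ((isUnit_iff_isUnit_det _).mpr (isUnit_iff_ne_zero.mpr ?_)))) (inv_pos.mpr hR)
  simpa [det_fin_two_of] using hR.ne'

theorem conjugateMatrix_apply_re_mul {R : ℂ} (hR : R.im ≠ 0) (z : ℂ) :
    (-z.im, (R * z).im) =
      (conjugateMatrix R 0 0 * (R * z).re + conjugateMatrix R 0 1 * z.re,
       conjugateMatrix R 1 0 * (R * z).re + conjugateMatrix R 1 1 * z.re) := by
  simp only [conjugateMatrix, Complex.sq_norm, normSq_apply, Matrix.smul_apply, of_apply, cons_val',
    cons_val_zero, cons_val_one, cons_val_fin_one, smul_eq_mul, mul_re, mul_im, Prod.mk.injEq]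
  constructor <;> field_simp <;> ring

noncomputable def reMulPair (a b : ℂ) : ℂ →L[ℝ] ℝ × ℝ :=
  (reCLM ∘L (a • 1 : ℂ →L[ℝ] ℂ)).prod (reCLM ∘L (b • 1 : ℂ →L[ℝ] ℂ))

theorem reMulPair_injective {a b : ℂ} (hb : b ≠ 0) (hab : (a / b).im ≠ 0) :
    Function.Injective (reMulPair a b) := by
  rw [injective_iff_map_eq_zero]
  intro w hw
  obtain ⟨haw, hbw⟩ := Prod.ext_iff.mp hw
  have hz : (b * w).re = 0 := hbw
  have hRz : ((a / b) * (b * w)).re = 0 := by rw [← mul_assoc, div_mul_cancel₀ a hb]; exact haw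
  have him : (b * w).im = 0 := by
    rw [mul_re, hz, mul_zero, zero_sub, neg_eq_zero] at hRz
    exact (mul_eq_zero.mp hRz).resolve_left hab
  simpa [hb] using (Complex.ext hz him : b * w = 0)

noncomputable def reMulPairEquiv {a b : ℂ} (hb : b ≠ 0) (hab : (a / b).im ≠ 0) :
    ℂ ≃L[ℝ] ℝ × ℝ :=
  (LinearMap.linearEquivOfInjective (reMulPair a b : ℂ →ₗ[ℝ] ℝ × ℝ) (reMulPair_injective hb hab)
    (by simp)).toContinuousLinearEquiv

theorem HasDerivAt.hasFDerivAt_re_prod {f g : ℂ → ℂ} {a b p : ℂ} (hf : HasDerivAt f a p)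
    (hg : HasDerivAt g b p) :
    HasFDerivAt (fun z => ((f z).re, (g z).re)) (reMulPair a b) p :=
  (reCLM.hasFDerivAt.comp p hf.complexToReal_fderiv).prodMk
    (reCLM.hasFDerivAt.comp p hg.complexToReal_fderiv)

theorem conjugate_map_fderiv_matrix_general
    (U : Set ℂ) (hU : IsOpen U) (f g : ℂ → ℂ)
    (hf : DifferentiableOn ℂ f U) (hg : DifferentiableOn ℂ g U)
    (p : ℂ) (hp : p ∈ U) (hg' : deriv g p ≠ 0)
    (hR : (deriv f p / deriv g p).im ≠ 0)
    (W : Set (ℝ × ℝ)) (hW : IsOpen W) (hxW : ((f p).re, (g p).re) ∈ W)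
    (ψ : ℝ × ℝ → ℂ)
    (hψc : ContinuousAt ψ ((f p).re, (g p).re))
    (hψp : ψ ((f p).re, (g p).re) = p)
    (hψχ : ∀ x ∈ W, ((f (ψ x)).re, (g (ψ x)).re) = x) :
    ∃ L : ℝ × ℝ →L[ℝ] ℝ × ℝ,
      HasFDerivAt (fun x : ℝ × ℝ => (-(g (ψ x)).im, (f (ψ x)).im)) L
          ((f p).re, (g p).re) ∧
      (∀ v : ℝ × ℝ,
        L v =
          ((((deriv f p / deriv g p).im)⁻¹ •
              !![1, -(deriv f p / deriv g p).re;
                 -(deriv f p / deriv g p).re, ‖deriv f p / deriv g p‖ ^ 2]) 0 0 * v.1 +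
            (((deriv f p / deriv g p).im)⁻¹ •
              !![1, -(deriv f p / deriv g p).re;
                 -(deriv f p / deriv g p).re, ‖deriv f p / deriv g p‖ ^ 2]) 0 1 * v.2,
           (((deriv f p / deriv g p).im)⁻¹ •
              !![1, -(deriv f p / deriv g p).re;
                 -(deriv f p / deriv g p).re, ‖deriv f p / deriv g p‖ ^ 2]) 1 0 * v.1 +
            (((deriv f p / deriv g p).im)⁻¹ •
              !![1, -(deriv f p / deriv g p).re;
                 -(deriv f p / deriv g p).re, ‖deriv f p / deriv g p‖ ^ 2]) 1 1 * v.2)) ∧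
      ((((deriv f p / deriv g p).im)⁻¹ •
          !![1, -(deriv f p / deriv g p).re;
             -(deriv f p / deriv g p).re, ‖deriv f p / deriv g p‖ ^ 2])ᵀ =
        (((deriv f p / deriv g p).im)⁻¹ •
          !![1, -(deriv f p / deriv g p).re;
             -(deriv f p / deriv g p).re, ‖deriv f p / deriv g p‖ ^ 2])) ∧
      ((((deriv f p / deriv g p).im)⁻¹ •
          !![1, -(deriv f p / deriv g p).re;
             -(deriv f p / deriv g p).re, ‖deriv f p / deriv g p‖ ^ 2]) :
            Matrix (Fin 2) (Fin 2) ℝ).det = 1 ∧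
      (0 < (deriv f p / deriv g p).im →
        ((((deriv f p / deriv g p).im)⁻¹ •
            !![1, -(deriv f p / deriv g p).re;
               -(deriv f p / deriv g p).re, ‖deriv f p / deriv g p‖ ^ 2]) :
              Matrix (Fin 2) (Fin 2) ℝ).PosDef) := by
  set R := deriv f p / deriv g p
  have hfd : HasDerivAt f (deriv f p) p := (hf.differentiableAt (hU.mem_nhds hp)).hasDerivAt
  have hgd : HasDerivAt g (deriv g p) p := (hg.differentiableAt (hU.mem_nhds hp)).hasDerivAt
  set E := reMulPairEquiv hg' hR
  have hψ : HasFDerivAt ψ (E.symm : ℝ × ℝ →L[ℝ] ℂ) ((f p).re, (g p).re) :=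
    HasFDerivAt.of_local_left_inverse hψc (by rw [hψp]; exact hfd.hasFDerivAt_re_prod hgd)
      (Filter.eventually_of_mem (hW.mem_nhds hxW) hψχ)
  have hΦ : HasFDerivAt (fun z => (-(g z).im, (f z).im))
      ((-(imCLM ∘L (deriv g p • 1 : ℂ →L[ℝ] ℂ))).prod (imCLM ∘L (deriv f p • 1 : ℂ →L[ℝ] ℂ)))
      (ψ ((f p).re, (g p).re)) := by
    rw [hψp]
    exact (imCLM.hasFDerivAt.comp p hgd.complexToReal_fderiv).neg.prodMk
      (imCLM.hasFDerivAt.comp p hfd.complexToReal_fderiv)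
  refine ⟨_, hΦ.comp _ hψ, fun v => ?_, conjugateMatrix_transpose R,
    conjugateMatrix_det hR, conjugateMatrix_posDef⟩
  obtain ⟨w, rfl⟩ := E.surjective v
  have hF : deriv f p * w = R * (deriv g p * w) := by rw [← mul_assoc, div_mul_cancel₀ _ hg']
  simp only [ContinuousLinearMap.comp_apply, ContinuousLinearEquiv.coe_coe, E.symm_apply_apply]
  have hconj := conjugateMatrix_apply_re_mul hR (deriv g p * w)
  rw [← hF] at hconj
  exact hconj

/-- Local form of the Hessian computation for the generalized Ronkin function:
with `R = f'/g'`, `χ(z) = (Re f z, Re g z)` and `ψ` a local right inverse of `χ`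
near `χ(p)`, the map `Φ(x) = (−Im g(ψ x), Im f(ψ x))` is differentiable at `χ(p)`
with derivative represented by the symmetric matrix
`(1/Im R(p)) • [[1, −Re R(p)], [−Re R(p), |R(p)|²]]`, which has determinant `1` and is
positive definite when `Im R(p) > 0`. -/
theorem conjugate_map_fderiv_matrix
    (U : Set ℂ) (hU : IsOpen U) (f g : ℂ → ℂ)
    (hf : DifferentiableOn ℂ f U) (hg : DifferentiableOn ℂ g U)
    (p : ℂ) (hp : p ∈ U) (hg' : deriv g p ≠ 0)
    (hR : (deriv f p / deriv g p).im ≠ 0)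
    (W : Set (ℝ × ℝ)) (hW : IsOpen W) (hxW : ((f p).re, (g p).re) ∈ W)
    (ψ : ℝ × ℝ → ℂ) (hψU : ∀ x ∈ W, ψ x ∈ U)
    (hψc : ContinuousAt ψ ((f p).re, (g p).re))
    (hψp : ψ ((f p).re, (g p).re) = p)
    (hψχ : ∀ x ∈ W, ((f (ψ x)).re, (g (ψ x)).re) = x) :
    ∃ L : ℝ × ℝ →L[ℝ] ℝ × ℝ,
      HasFDerivAt (fun x : ℝ × ℝ => (-(g (ψ x)).im, (f (ψ x)).im)) L
          ((f p).re, (g p).re) ∧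
      (∀ v : ℝ × ℝ,
        L v =
          ((((deriv f p / deriv g p).im)⁻¹ •
              !![1, -(deriv f p / deriv g p).re;
                 -(deriv f p / deriv g p).re, ‖deriv f p / deriv g p‖ ^ 2]) 0 0 * v.1 +
            (((deriv f p / deriv g p).im)⁻¹ •
              !![1, -(deriv f p / deriv g p).re;
                 -(deriv f p / deriv g p).re, ‖deriv f p / deriv g p‖ ^ 2]) 0 1 * v.2,
           (((deriv f p / deriv g p).im)⁻¹ •
              !![1, -(deriv f p / deriv g p).re;
                 -(deriv f p / deriv g p).re, ‖deriv f p / deriv g p‖ ^ 2]) 1 0 * v.1 +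
            (((deriv f p / deriv g p).im)⁻¹ •
              !![1, -(deriv f p / deriv g p).re;
                 -(deriv f p / deriv g p).re, ‖deriv f p / deriv g p‖ ^ 2]) 1 1 * v.2)) ∧
      ((((deriv f p / deriv g p).im)⁻¹ •
          !![1, -(deriv f p / deriv g p).re;
             -(deriv f p / deriv g p).re, ‖deriv f p / deriv g p‖ ^ 2])ᵀ =
        (((deriv f p / deriv g p).im)⁻¹ •
          !![1, -(deriv f p / deriv g p).re;
             -(deriv f p / deriv g p).re, ‖deriv f p / deriv g p‖ ^ 2])) ∧
      ((((deriv f p / deriv g p).im)⁻¹ •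
          !![1, -(deriv f p / deriv g p).re;
             -(deriv f p / deriv g p).re, ‖deriv f p / deriv g p‖ ^ 2]) :
            Matrix (Fin 2) (Fin 2) ℝ).det = 1 ∧
      (0 < (deriv f p / deriv g p).im →
        ((((deriv f p / deriv g p).im)⁻¹ •
            !![1, -(deriv f p / deriv g p).re;
               -(deriv f p / deriv g p).re, ‖deriv f p / deriv g p‖ ^ 2]) :
              Matrix (Fin 2) (Fin 2) ℝ).PosDef) :=
  conjugate_map_fderiv_matrix_general U hU f g hf hg p hp hg' hR W hW hxW ψ hψc hψp hψχ
end

section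
/- Let U ⊆ ℂ be open, f, g : ℂ → ℂ holomorphic on U, p ∈ U with g′(p) ≠ 0 and Im R(p) ≠ 0, where R = f′/g′, and let χ(z) = (Re f(z), Re g(z)). Then there exist an open convex set W ⊆ ℝ² with χ(p) ∈ W, a continuous map ψ : W → U with ψ(χ(p)) = p and χ(ψ(x)) = x for all x ∈ W, and a convex differentiable function G : W → ℝ whose gradient satisfies ∇G(x) = s·(−Im g(ψ(x)), Im f(ψ(x))) for all x ∈ W, where s = 1 if Im R(p) > 0 and s = −1 if Im R(p) < 0. -/
/-!
The amoeba map `χ = (Re f, Re g)` has real Jacobian determinant `Im (f' * conj g') = Im R * |g'|²`,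
so it is a local diffeomorphism near `p`, with inverse `ψ`. Let `s` be the sign of `Im R(p)`.
If `F' = g f'`, the function `s * (Re g * Im f - Im F)` has differential
`s * (-Im g * d Re f + Im f * d Re g)`, so its pullback `G` by `ψ` has gradient
`s * (-Im g, Im f) ∘ ψ`. The Hessian of `G` at `dχ k` evaluates to `s * Im (f' * conj g') * |k|²`,
which is nonnegative as long as `Im R` keeps the sign `s`; hence `G` is convex on a small ball
around `χ p`.
-/

open Complex Set Metric Filter Topology ComplexConjugate

theorem convexOn_of_hasFDerivAt2_nonneg {E : Type*} [NormedAddCommGroup E] [NormedSpace ℝ E]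
    {s : Set E} {f : E → ℝ} {f' : E → E →L[ℝ] ℝ} (hs : Convex ℝ s)
    (hf : ∀ x ∈ s, HasFDerivAt f (f' x) x)
    (hf' : ∀ x ∈ s, ∃ f'' : E →L[ℝ] E →L[ℝ] ℝ, HasFDerivAt f' f'' x ∧ ∀ v, 0 ≤ f'' v v) :
    ConvexOn ℝ s f := by
  choose! f'' hf' hf'' using hf'
  refine ⟨hs, fun x hx y hy a b ha hb hab => ?_⟩
  have hseg : ∀ t ∈ Icc (0 : ℝ) 1, AffineMap.lineMap x y t ∈ s := fun t ht =>
    hs.lineMap_mem hx hy ht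
  have hφ : ConvexOn ℝ (Icc 0 1) fun t : ℝ => f (AffineMap.lineMap x y t) := by
    refine convexOn_of_hasDerivWithinAt2_nonneg (convex_Icc 0 1)
      (f' := fun t => f' (AffineMap.lineMap x y t) (y - x))
      (f'' := fun t => f'' (AffineMap.lineMap x y t) (y - x) (y - x)) ?_ ?_ ?_ ?_
    · exact fun t ht => ((hf _ (hseg t ht)).comp_hasDerivAt t
        AffineMap.hasDerivAt_lineMap).continuousAt.continuousWithinAt
    · exact fun t ht => ((hf _ (hseg t (interior_subset ht))).comp_hasDerivAt t
        AffineMap.hasDerivAt_lineMap).hasDerivWithinAt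
    · intro t ht
      have := (hf' _ (hseg t (interior_subset ht))).comp_hasDerivAt t
        AffineMap.hasDerivAt_lineMap
      simpa using (this.clm_apply (hasDerivAt_const t (y - x))).hasDerivWithinAt
    · exact fun t ht => hf'' _ (hseg t (interior_subset ht)) _
  have := hφ.2 (left_mem_Icc.2 zero_le_one) (right_mem_Icc.2 zero_le_one) ha hb hab
  rw [eq_sub_of_add_eq hab] at this ⊢
  simpa [AffineMap.lineMap_apply_module] using this

theorem HasStrictFDerivAt.exists_ball_rightInverse {𝕜 E F : Type*} [NontriviallyNormedField 𝕜]
    [NormedAddCommGroup E] [NormedSpace 𝕜 E] [CompleteSpace E]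
    [NormedAddCommGroup F] [NormedSpace 𝕜 F] [CompleteSpace F]
    {χ : E → F} {L : E ≃L[𝕜] F} {p : E} (hχ : HasStrictFDerivAt χ (L : E →L[𝕜] F) p)
    {P : E → Prop} (hP : ∀ᶠ z in 𝓝 p, P z) :
    ∃ ε > 0, ∃ ψ : F → E, ψ (χ p) = p ∧ ContinuousOn ψ (ball (χ p) ε) ∧
      ∀ y ∈ ball (χ p) ε, P (ψ y) ∧ χ (ψ y) = y ∧
        ∀ L' : E ≃L[𝕜] F, HasFDerivAt χ (L' : E →L[𝕜] F) (ψ y) →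
          HasFDerivAt ψ (L'.symm : F →L[𝕜] E) y := by
  set Φ := hχ.toOpenPartialHomeomorph χ
  have hΦp : Φ.symm (χ p) = p := Φ.left_inv hχ.mem_toOpenPartialHomeomorph_source
  have htarget : χ p ∈ Φ.target := hχ.image_mem_toOpenPartialHomeomorph_target
  have hev : ∀ᶠ y in 𝓝 (χ p), y ∈ Φ.target ∧ P (Φ.symm y) :=
    Eventually.and (Φ.open_target.mem_nhds htarget)
      ((Φ.continuousAt_symm htarget).eventually (by rwa [hΦp]))
  obtain ⟨ε, hε, hball⟩ := eventually_nhds_iff_ball.1 hev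
  exact ⟨ε, hε, Φ.symm, hΦp, Φ.continuousOn_symm.mono fun y hy => (hball y hy).1,
    fun y hy => ⟨(hball y hy).2, Φ.right_inv (hball y hy).1,
      fun L' hL' => Φ.hasFDerivAt_symm (hball y hy).1 hL'⟩⟩

noncomputable section

def amoebaMap (f g : ℂ → ℂ) (z : ℂ) : ℝ × ℝ := ((f z).re, (g z).re)

def amoebaDeriv (a b : ℂ) : ℂ →L[ℝ] ℝ × ℝ :=
  (reCLM ∘L ((1 : ℂ →L[ℂ] ℂ).smulRight a).restrictScalars ℝ).prod
    (reCLM ∘L ((1 : ℂ →L[ℂ] ℂ).smulRight b).restrictScalars ℝ)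

@[simp] lemma amoebaDeriv_apply (a b k : ℂ) : amoebaDeriv a b k = ((k * a).re, (k * b).re) := rfl

lemma HasStrictDerivAt.amoebaMap {f g : ℂ → ℂ} {a b z : ℂ} (hf : HasStrictDerivAt f a z)
    (hg : HasStrictDerivAt g b z) : HasStrictFDerivAt (amoebaMap f g) (amoebaDeriv a b) z :=
  (reCLM.hasStrictFDerivAt.comp z (hf.hasStrictFDerivAt.restrictScalars ℝ)).prodMk
    (reCLM.hasStrictFDerivAt.comp z (hg.hasStrictFDerivAt.restrictScalars ℝ))

lemma im_mul_re_sub_im_mul_re (a b k : ℂ) :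
    (k * a).im * (k * b).re - (k * b).im * (k * a).re = (a * conj b).im * normSq k := by
  simp only [mul_re, mul_im, conj_re, conj_im, normSq_apply]
  ring

lemma amoebaDeriv_injective {a b : ℂ} (h : (a * conj b).im ≠ 0) :
    Function.Injective (amoebaDeriv a b) := by
  refine (injective_iff_map_eq_zero (amoebaDeriv a b)).2 fun k hk => ?_
  have hdet := im_mul_re_sub_im_mul_re a b k
  simp only [amoebaDeriv_apply, Prod.mk_eq_zero] at hk
  rw [hk.1, hk.2, mul_zero, mul_zero, sub_zero, eq_comm, mul_eq_zero] at hdet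
  exact normSq_eq_zero.1 (hdet.resolve_left h)

def amoebaDerivEquiv (a b : ℂ) (h : (a * conj b).im ≠ 0) : ℂ ≃L[ℝ] ℝ × ℝ :=
  (LinearMap.linearEquivOfInjective (amoebaDeriv a b).toLinearMap (amoebaDeriv_injective h)
    (by simp [finrank_real_complex])).toContinuousLinearEquiv

@[simp] lemma coe_amoebaDerivEquiv (a b : ℂ) (h : (a * conj b).im ≠ 0) :
    (amoebaDerivEquiv a b h : ℂ →L[ℝ] ℝ × ℝ) = amoebaDeriv a b := rfl

lemma im_mul_conj_eq_div_im_mul_normSq (a b : ℂ) : (a * conj b).im = (a / b).im * normSq b := by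
  rcases eq_or_ne b 0 with rfl | hb
  · simp
  · conv_lhs => rw [← div_mul_cancel₀ a hb, mul_assoc, mul_conj]
    exact im_mul_ofReal _ _

lemma zero_lt_sign_div_im_mul_im_mul_conj {a b : ℂ} (hb : b ≠ 0) (h : (a / b).im ≠ 0) :
    0 < (if 0 < (a / b).im then 1 else -1 : ℝ) * (a * conj b).im := by
  rw [im_mul_conj_eq_div_im_mul_normSq, ← mul_assoc]
  refine mul_pos ?_ (normSq_pos.2 hb)
  rcases h.lt_or_gt with h | h <;> simp [h, h.not_gt]

def ronkinPotential (c : ℝ) (f g F : ℂ → ℂ) (z : ℂ) : ℝ := c * ((g z).re * (f z).im - (F z).im)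

def ronkinGrad (c : ℝ) (f g : ℂ → ℂ) (z : ℂ) : ℝ × ℝ →L[ℝ] ℝ :=
  (c * -(g z).im) • ContinuousLinearMap.fst ℝ ℝ ℝ + (c * (f z).im) • ContinuousLinearMap.snd ℝ ℝ ℝ

lemma hasFDerivAt_ronkinPotential {c : ℝ} {f g F : ℂ → ℂ} {a b z : ℂ} (hf : HasDerivAt f a z)
    (hg : HasDerivAt g b z) (hF : HasDerivAt F (g z * a) z) :
    HasFDerivAt (ronkinPotential c f g F) (ronkinGrad c f g z ∘L amoebaDeriv a b) z := by
  have hre := reCLM.hasFDerivAt.comp z (hg.hasFDerivAt.restrictScalars ℝ)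
  have him := imCLM.hasFDerivAt.comp z (hf.hasFDerivAt.restrictScalars ℝ)
  have hFim := imCLM.hasFDerivAt.comp z (hF.hasFDerivAt.restrictScalars ℝ)
  refine (((hre.mul him).sub hFim).const_mul c).congr_fderiv ?_
  ext k
  simp only [ronkinGrad, ContinuousLinearMap.add_comp, ContinuousLinearMap.smul_comp,
    add_apply, sub_apply, smul_apply,
    ContinuousLinearMap.comp_apply, ContinuousLinearMap.coe_restrictScalars',
    ContinuousLinearMap.toSpanSingleton_apply, ContinuousLinearMap.coe_fst',
    ContinuousLinearMap.coe_snd', Function.comp_apply, reCLM_apply, imCLM_apply, smul_eq_mul,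
    amoebaDeriv_apply, mul_re, mul_im]
  ring

def ronkinHess (c : ℝ) (a b : ℂ) : ℂ →L[ℝ] ℝ × ℝ →L[ℝ] ℝ :=
  (c • -(imCLM ∘L ((1 : ℂ →L[ℂ] ℂ).smulRight b).restrictScalars ℝ)).smulRight
      (ContinuousLinearMap.fst ℝ ℝ ℝ) +
    (c • (imCLM ∘L ((1 : ℂ →L[ℂ] ℂ).smulRight a).restrictScalars ℝ)).smulRight
      (ContinuousLinearMap.snd ℝ ℝ ℝ)

lemma hasFDerivAt_ronkinGrad {c : ℝ} {f g : ℂ → ℂ} {a b z : ℂ} (hf : HasDerivAt f a z)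
    (hg : HasDerivAt g b z) : HasFDerivAt (ronkinGrad c f g) (ronkinHess c a b) z :=
  (((imCLM.hasFDerivAt.comp z (hg.hasFDerivAt.restrictScalars ℝ)).neg.const_mul c).smul_const
      (ContinuousLinearMap.fst ℝ ℝ ℝ)).add
    (((imCLM.hasFDerivAt.comp z (hf.hasFDerivAt.restrictScalars ℝ)).const_mul c).smul_const
      (ContinuousLinearMap.snd ℝ ℝ ℝ))

lemma ronkinHess_apply_amoebaDeriv (c : ℝ) (a b k : ℂ) :
    ronkinHess c a b k (amoebaDeriv a b k) = c * (a * conj b).im * normSq k := by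
  rw [mul_assoc, ← im_mul_re_sub_im_mul_re]
  simp only [ronkinHess, add_apply, ContinuousLinearMap.smulRight_apply,
    neg_apply, smul_apply, ContinuousLinearMap.comp_apply,
    ContinuousLinearMap.coe_restrictScalars', one_apply_eq_self,
    ContinuousLinearMap.coe_fst', ContinuousLinearMap.coe_snd', imCLM_apply, smul_eq_mul,
    amoebaDeriv_apply]
  ring

lemma hasFDerivAt_ronkinPotential_comp {c : ℝ} {f g F : ℂ → ℂ} {ψ : ℝ × ℝ → ℂ} {x : ℝ × ℝ}
    {a b : ℂ} (hf : HasDerivAt f a (ψ x)) (hg : HasDerivAt g b (ψ x))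
    (hF : HasDerivAt F (g (ψ x) * a) (ψ x)) (hab : (a * conj b).im ≠ 0)
    (hψ : HasFDerivAt ψ ((amoebaDerivEquiv a b hab).symm : ℝ × ℝ →L[ℝ] ℂ) x) :
    HasFDerivAt (ronkinPotential c f g F ∘ ψ) (ronkinGrad c f g (ψ x)) x := by
  have h := (hasFDerivAt_ronkinPotential (c := c) hf hg hF).comp x hψ
  rwa [← coe_amoebaDerivEquiv a b hab, ContinuousLinearMap.comp_assoc,
    ContinuousLinearEquiv.coe_comp_coe_symm, ContinuousLinearMap.comp_id] at h

lemma exists_hasFDerivAt_ronkinGrad_comp_nonneg {c : ℝ} {f g : ℂ → ℂ} {ψ : ℝ × ℝ → ℂ}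
    {x : ℝ × ℝ} {a b : ℂ} (hf : HasDerivAt f a (ψ x)) (hg : HasDerivAt g b (ψ x))
    (hab : (a * conj b).im ≠ 0) (hc : 0 ≤ c * (a * conj b).im)
    (hψ : HasFDerivAt ψ ((amoebaDerivEquiv a b hab).symm : ℝ × ℝ →L[ℝ] ℂ) x) :
    ∃ H : ℝ × ℝ →L[ℝ] ℝ × ℝ →L[ℝ] ℝ, HasFDerivAt (ronkinGrad c f g ∘ ψ) H x ∧ ∀ v, 0 ≤ H v v := by
  refine ⟨_, (hasFDerivAt_ronkinGrad (c := c) hf hg).comp x hψ, fun v => ?_⟩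
  obtain ⟨k, rfl⟩ := (amoebaDerivEquiv a b hab).surjective v
  simp only [ContinuousLinearMap.comp_apply, ContinuousLinearEquiv.coe_coe,
    ContinuousLinearEquiv.symm_apply_apply]
  exact ronkinHess_apply_amoebaDeriv c a b k ▸ mul_nonneg hc (normSq_nonneg k)

end

/-- Local convex generating function for the generalized Ronkin function: with
`R = f'/g'` and `χ(z) = (Re f z, Re g z)`, if `g'(p) ≠ 0` and `Im R(p) ≠ 0` then on a
convex open neighborhood `W` of `χ(p)` there is a continuous local right inverse `ψ` of
`χ` and a convex differentiable function `G` with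
`∇G(x) = sgn(Im R(p)) • (−Im g(ψ x), Im f(ψ x))`. -/
theorem exists_local_convex_generating_function
    (U : Set ℂ) (hU : IsOpen U) (f g : ℂ → ℂ)
    (hf : DifferentiableOn ℂ f U) (hg : DifferentiableOn ℂ g U)
    (p : ℂ) (hp : p ∈ U) (hg' : deriv g p ≠ 0)
    (hR : (deriv f p / deriv g p).im ≠ 0) :
    ∃ (W : Set (ℝ × ℝ)) (ψ : ℝ × ℝ → ℂ) (G : ℝ × ℝ → ℝ),
      IsOpen W ∧ Convex ℝ W ∧ ((f p).re, (g p).re) ∈ W ∧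
      ContinuousOn ψ W ∧ (∀ x ∈ W, ψ x ∈ U) ∧
      ψ ((f p).re, (g p).re) = p ∧
      (∀ x ∈ W, ((f (ψ x)).re, (g (ψ x)).re) = x) ∧
      ConvexOn ℝ W G ∧
      (∀ x ∈ W,
        HasFDerivAt G
          (((if 0 < (deriv f p / deriv g p).im then (1 : ℝ) else -1) * (-(g (ψ x)).im)) •
              ContinuousLinearMap.fst ℝ ℝ ℝ +
            ((if 0 < (deriv f p / deriv g p).im then (1 : ℝ) else -1) * (f (ψ x)).im) •
              ContinuousLinearMap.snd ℝ ℝ ℝ) x) := by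
  set s : ℝ := if 0 < (deriv f p / deriv g p).im then 1 else -1
  have hfU : ∀ z ∈ U, HasStrictDerivAt f (deriv f z) z := fun z hz =>
    (hf.analyticAt (hU.mem_nhds hz)).hasStrictDerivAt
  have hgU : ∀ z ∈ U, HasStrictDerivAt g (deriv g z) z := fun z hz =>
    (hg.analyticAt (hU.mem_nhds hz)).hasStrictDerivAt
  obtain ⟨r, hr, hrU⟩ := isOpen_iff.1 hU p hp
  obtain ⟨F, hF⟩ := ((hg.mul (hf.deriv hU)).mono hrU).isExactOn_ball
  have hJp : 0 < s * (deriv f p * conj (deriv g p)).im :=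
    zero_lt_sign_div_im_mul_im_mul_conj hg' hR
  have hJ : ∀ᶠ z in 𝓝 p, 0 < s * (deriv f z * conj (deriv g z)).im := by
    have hd : ∀ h : ℂ → ℂ, DifferentiableOn ℂ h U → ContinuousAt (deriv h) p := fun h hh =>
      (hh.deriv hU).continuousOn.continuousAt (hU.mem_nhds hp)
    exact ((continuous_im.continuousAt.comp ((hd f hf).mul
      (continuous_conj.continuousAt.comp (hd g hg)))).const_mul s).eventually (lt_mem_nhds hJp)
  obtain ⟨ε, hε, ψ, hψp, hψc, hψ⟩ := ((hfU p hp).amoebaMap (hgU p hp)).exists_ball_rightInverse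
    (L := amoebaDerivEquiv _ _ (right_ne_zero_of_mul hJp.ne'))
    (Eventually.and (ball_mem_nhds p hr) hJ)
  have hloc : ∀ x ∈ ball (amoebaMap f g p) ε,
      HasFDerivAt (ronkinPotential s f g F ∘ ψ) (ronkinGrad s f g (ψ x)) x ∧
        ∃ H : ℝ × ℝ →L[ℝ] ℝ × ℝ →L[ℝ] ℝ, HasFDerivAt (ronkinGrad s f g ∘ ψ) H x ∧
          ∀ v, 0 ≤ H v v := by
    intro x hx
    obtain ⟨⟨hzr, hzJ⟩, -, hψ'⟩ := hψ x hx
    have hne := right_ne_zero_of_mul hzJ.ne'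
    have hfz := hfU _ (hrU hzr)
    have hgz := hgU _ (hrU hzr)
    have hψx := hψ' (amoebaDerivEquiv _ _ hne) (hfz.amoebaMap hgz).hasFDerivAt
    exact ⟨hasFDerivAt_ronkinPotential_comp hfz.hasDerivAt hgz.hasDerivAt (hF _ hzr) hne hψx,
      exists_hasFDerivAt_ronkinGrad_comp_nonneg hfz.hasDerivAt hgz.hasDerivAt hne hzJ.le hψx⟩
  exact ⟨_, ψ, _, isOpen_ball, convex_ball _ _, mem_ball_self hε, hψc,
    fun x hx => hrU (hψ x hx).1.1, hψp, fun x hx => (hψ x hx).2.1,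
    convexOn_of_hasFDerivAt2_nonneg (convex_ball _ _) (fun x hx => (hloc x hx).1)
      fun x hx => (hloc x hx).2, fun x hx => (hloc x hx).1⟩
end

section
/- Let τ, ψ : ℤ × ℤ → ℂ with τ(m+1,n) ≠ 0 and τ(m,n+1) ≠ 0 for all (m,n) ∈ ℤ², define u(m,n) = τ(m+1,n+1)·τ(m,n) / (τ(m+1,n)·τ(m,n+1)) and Ψ(m,n) = (−1)ⁿ·τ(m,n)·ψ(m,n). Then ψ satisfies ψ(m,n+1) = ψ(m+1,n) + u(m,n)·ψ(m,n) for all (m,n) if and only if Ψ satisfies τ(m+1,n)·Ψ(m,n+1) + τ(m,n+1)·Ψ(m+1,n) + τ(m+1,n+1)·Ψ(m,n) = 0 for all (m,n). -/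
section GaugeIdentity

variable {K : Type*} [Field K] {a b c d s x y z : K}

theorem gauge_bilinear_eq_neg_mul_sub (ha : a ≠ 0) (hb : b ≠ 0) :
    a * (-s * b * x) + b * (s * a * y) + c * (s * d * z) =
      -(s * a * b) * (x - (y + c * d / (a * b) * z)) := by
  field_simp
  ring

theorem eq_add_div_mul_iff_gauge_bilinear_eq_zero (ha : a ≠ 0) (hb : b ≠ 0) (hs : s ≠ 0) :
    x = y + c * d / (a * b) * z ↔
      a * (-s * b * x) + b * (s * a * y) + c * (s * d * z) = 0 := by
  rw [gauge_bilinear_eq_neg_mul_sub ha hb, mul_eq_zero, neg_eq_zero, sub_eq_zero,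
    or_iff_right (mul_ne_zero (mul_ne_zero hs ha) hb)]

end GaugeIdentity

/-- Gauge transformation to the bilinear form: with
`u(m,n) = τ(m+1,n+1)τ(m,n)/(τ(m+1,n)τ(m,n+1))` and `Ψ(m,n) = (−1)ⁿ τ(m,n) ψ(m,n)`,
the equation `ψ(m,n+1) = ψ(m+1,n) + u(m,n) ψ(m,n)` holds for all `(m,n)` iff
`τ(m+1,n) Ψ(m,n+1) + τ(m,n+1) Ψ(m+1,n) + τ(m+1,n+1) Ψ(m,n) = 0` for all `(m,n)`. -/
theorem gauge_transform_bilinear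
    (τ ψ : ℤ × ℤ → ℂ)
    (h1 : ∀ m n : ℤ, τ (m + 1, n) ≠ 0)
    (h2 : ∀ m n : ℤ, τ (m, n + 1) ≠ 0) :
    (∀ m n : ℤ,
        ψ (m, n + 1) =
          ψ (m + 1, n) +
            τ (m + 1, n + 1) * τ (m, n) / (τ (m + 1, n) * τ (m, n + 1)) * ψ (m, n)) ↔
      (∀ m n : ℤ,
        τ (m + 1, n) * ((-1 : ℂ) ^ (n + 1) * τ (m, n + 1) * ψ (m, n + 1)) +
            τ (m, n + 1) * ((-1 : ℂ) ^ n * τ (m + 1, n) * ψ (m + 1, n)) +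
            τ (m + 1, n + 1) * ((-1 : ℂ) ^ n * τ (m, n) * ψ (m, n)) = 0) := by
  refine forall₂_congr fun m n => ?_
  rw [zpow_add_one₀ (neg_ne_zero.mpr one_ne_zero), mul_neg_one]
  exact eq_add_div_mul_iff_gauge_bilinear_eq_zero (h1 m n) (h2 m n)
    (zpow_ne_zero n (neg_ne_zero.mpr one_ne_zero))
end
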